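/- Let $n \ge 1$ and consider the circle group $\mathbb{T} = \mathbb{R}/2\pi\mathbb{Z}$. Suppose $\Phi_1, \ldots, \Phi_n \in L^1(\mathbb{T})$ satisfy $\widehat{\Phi_j}(j) = 1$ for each $j$ (where $\widehat{\Phi}(k) = \frac{1}{2\pi}\int_0^{2\pi} \Phi(x) e^{-ikx}\,dx$), and suppose that for every $\varepsilon \in \{-1,1\}^n$, $\|\sum_j \varepsilon_j \Phi_j\|_{L^1} \le M$. Then $M \ge \sqrt{n/2}$. -/

import Mathlib

/-!
Pairing `Φ_j` with the character `e^{ijx}` gives `1 = |Φ̂_j(j)| ≤ ‖Φ_j‖₁`, so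
`n ≤ ∫ ∑_j |Φ_j|`. Pointwise in `x`, Cauchy–Schwarz and Khinchin's inequality with the sharp
constant `1/√2` give `∑_j |z_j| ≤ √n (∑_j |z_j|²)^{1/2} ≤ √(2n) 𝔼_ε |∑_j ε_j z_j|`.
Integrating, and bounding each `‖∑_j ε_j Φ_j‖₁` by `M`, yields `n ≤ √(2n) M`.

Khinchin's inequality is proved following Latała and Oleszkiewicz: `f(ε) = ‖∑_j ε_j v_j‖` is even
and satisfies `(n - 2) f ≤ ∑_i f ∘ (flip the i-th sign)` by the triangle inequality, and for such
nonnegative `f` Walsh–Fourier analysis on `{±1}ⁿ` gives `𝔼 f² ≤ 2 (𝔼 f)²`; in an inner product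
space `𝔼 f² = ∑_j ‖v_j‖²`.
-/

open MeasureTheory Real

instance : Fact (0 < 2 * Real.pi) := ⟨by positivity⟩

open Finset

namespace BooleanCube

variable {n : ℕ}

/-- Points of the cube `{±1}ⁿ` are encoded as `x : Fin n → Bool`, with coordinates `sgn (x j)`. -/
def sgn (b : Bool) : ℝ := if b then 1 else -1

@[simp] lemma sgn_true : sgn true = 1 := rfl

@[simp] lemma sgn_false : sgn false = -1 := rfl

@[simp] lemma sgn_mul_self (b : Bool) : sgn b * sgn b = 1 := by cases b <;> simp

@[simp] lemma sgn_not (b : Bool) : sgn (!b) = -sgn b := by cases b <;> simp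

lemma sgn_mul_sgn_add_one (a b : Bool) : sgn a * sgn b + 1 = if a = b then 2 else 0 := by
  cases a <;> cases b <;> norm_num

def walsh (S : Finset (Fin n)) (x : Fin n → Bool) : ℝ := ∏ i ∈ S, sgn (x i)

def flipAt (i : Fin n) (x : Fin n → Bool) : Fin n → Bool := Function.update x i (!x i)

@[simp] lemma flipAt_apply_self (i : Fin n) (x : Fin n → Bool) : flipAt i x i = !x i := by
  simp [flipAt]

lemma flipAt_apply_of_ne {i j : Fin n} (h : j ≠ i) (x : Fin n → Bool) : flipAt i x j = x j := by
  simp [flipAt, h]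

lemma flipAt_involutive (i : Fin n) : Function.Involutive (flipAt i) := by
  intro x
  ext j
  by_cases h : j = i
  · subst h; simp
  · simp [flipAt_apply_of_ne h]

lemma sum_comp_flipAt {M : Type*} [AddCommMonoid M] (i : Fin n) (g : (Fin n → Bool) → M) :
    ∑ x, g (flipAt i x) = ∑ x, g x :=
  Equiv.sum_comp (flipAt_involutive i).toPerm g

lemma sum_comp_compl {M : Type*} [AddCommMonoid M] (g : (Fin n → Bool) → M) :
    ∑ x, g xᶜ = ∑ x, g x :=
  Equiv.sum_comp (compl_involutive.toPerm _) g

lemma walsh_flipAt (S : Finset (Fin n)) (i : Fin n) (x : Fin n → Bool) :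
    walsh S (flipAt i x) = (if i ∈ S then -1 else 1) * walsh S x := by
  split_ifs with hi
  · rw [walsh, walsh, ← mul_prod_erase S _ hi, ← mul_prod_erase S _ hi, flipAt_apply_self, sgn_not,
      neg_one_mul, neg_mul]
    congr 2
    exact prod_congr rfl fun j hj => by rw [flipAt_apply_of_ne (ne_of_mem_erase hj)]
  · rw [one_mul]
    exact prod_congr rfl fun j hj => by rw [flipAt_apply_of_ne (ne_of_mem_of_not_mem hj hi)]

lemma walsh_compl (S : Finset (Fin n)) (x : Fin n → Bool) :
    walsh S xᶜ = (-1) ^ #S * walsh S x := by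
  simp only [walsh, Pi.compl_apply, Bool.compl_eq_bnot, sgn_not, prod_neg]

lemma sum_sgn_mul_sgn (j k : Fin n) :
    ∑ x : Fin n → Bool, sgn (x j) * sgn (x k) = if j = k then 2 ^ n else 0 := by
  split_ifs with h
  · simp [h]
  · have hsum := sum_comp_flipAt j fun x => sgn (x j) * sgn (x k)
    simp only [flipAt_apply_self, flipAt_apply_of_ne (Ne.symm h), sgn_not, neg_mul,
      sum_neg_distrib] at hsum
    linarith

lemma sum_walsh_mul_walsh (x y : Fin n → Bool) :
    ∑ S, walsh S x * walsh S y = if x = y then 2 ^ n else 0 := by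
  simp_rw [walsh, ← prod_mul_distrib]
  rw [← powerset_univ, ← prod_add_one]
  simp_rw [sgn_mul_sgn_add_one, prod_ite_zero, prod_const, card_univ, Fintype.card_fin]
  simp [funext_iff]

def walshCoeff (f : (Fin n → Bool) → ℝ) (S : Finset (Fin n)) : ℝ := ∑ x, f x * walsh S x

lemma sum_walshCoeff_mul_walsh (f : (Fin n → Bool) → ℝ) (x : Fin n → Bool) :
    ∑ S, walshCoeff f S * walsh S x = 2 ^ n * f x := by
  simp_rw [walshCoeff, sum_mul, mul_assoc]
  rw [sum_comm]
  simp_rw [← mul_sum, sum_walsh_mul_walsh, mul_ite, mul_zero, sum_ite_eq', mem_univ, if_true,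
    mul_comm]

lemma sum_walshCoeff_mul_walshCoeff (f g : (Fin n → Bool) → ℝ) :
    ∑ S, walshCoeff f S * walshCoeff g S = 2 ^ n * ∑ x, f x * g x := by
  calc ∑ S, walshCoeff f S * walshCoeff g S
      = ∑ x, f x * ∑ S, walshCoeff g S * walsh S x := by
        conv_lhs => enter [2, S]; rw [walshCoeff, sum_mul]
        rw [sum_comm]
        exact sum_congr rfl fun x _ => by rw [mul_sum]; exact sum_congr rfl fun S _ => by ring
    _ = 2 ^ n * ∑ x, f x * g x := by
        simp_rw [sum_walshCoeff_mul_walsh, mul_sum, mul_left_comm]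

lemma walshCoeff_empty (f : (Fin n → Bool) → ℝ) : walshCoeff f ∅ = ∑ x, f x := by
  simp [walshCoeff, walsh]

lemma walshCoeff_comp_flipAt (f : (Fin n → Bool) → ℝ) (i : Fin n) (S : Finset (Fin n)) :
    walshCoeff (fun x => f (flipAt i x)) S = (if i ∈ S then -1 else 1) * walshCoeff f S := by
  rw [walshCoeff, ← sum_comp_flipAt i, walshCoeff, mul_sum]
  simp_rw [flipAt_involutive i _, walsh_flipAt, mul_left_comm]

lemma walshCoeff_eq_zero_of_odd {f : (Fin n → Bool) → ℝ} (hf : ∀ x, f xᶜ = f x)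
    {S : Finset (Fin n)} (hS : Odd #S) : walshCoeff f S = 0 := by
  have h := sum_comp_compl fun x => f x * walsh S x
  simp only [hf, walsh_compl, hS.neg_one_pow, neg_one_mul, mul_neg, sum_neg_distrib] at h
  rw [walshCoeff]
  linarith

lemma sum_ite_mem_neg_one (S : Finset (Fin n)) :
    ∑ i, (if i ∈ S then (-1 : ℝ) else 1) = n - 2 * #S := by
  have hS : #S ≤ n := by simpa using card_le_univ S
  rw [sum_ite, sum_const, sum_const, filter_mem_eq_inter, univ_inter, filter_not,
    filter_mem_eq_inter, univ_inter, card_sdiff_of_subset (subset_univ S), card_univ,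
    Fintype.card_fin, nsmul_eq_mul, nsmul_eq_mul, Nat.cast_sub hS]
  ring

lemma walshCoeff_sum_flipAt (f : (Fin n → Bool) → ℝ) (S : Finset (Fin n)) :
    walshCoeff (fun x => ∑ i, f (flipAt i x)) S = (n - 2 * #S) * walshCoeff f S := by
  calc walshCoeff (fun x => ∑ i, f (flipAt i x)) S
      = ∑ i, walshCoeff (fun x => f (flipAt i x)) S := by
        simp_rw [walshCoeff, sum_mul]
        exact sum_comm
    _ = (n - 2 * #S) * walshCoeff f S := by
        simp_rw [walshCoeff_comp_flipAt, ← sum_mul, sum_ite_mem_neg_one]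

/-- In the Walsh basis the hypothesis on `flipAt` reads `0 ≤ ∑_S (2 - 2|S|) c_S²`; evenness kills
the coefficients with `|S| = 1`, so `∑_{|S| ≥ 2} c_S² ≤ c_∅²`. -/
lemma two_pow_mul_sum_sq_le {f : (Fin n → Bool) → ℝ} (hf₀ : 0 ≤ f) (hf_compl : ∀ x, f xᶜ = f x)
    (hf_flip : ∀ x, (n - 2) * f x ≤ ∑ i, f (flipAt i x)) :
    2 ^ n * ∑ x, f x ^ 2 ≤ 2 * (∑ x, f x) ^ 2 := by
  set g : (Fin n → Bool) → ℝ := fun x => ∑ i, f (flipAt i x) - (n - 2) * f x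
  have hg : ∀ S, walshCoeff g S = (2 - 2 * #S) * walshCoeff f S := by
    intro S
    have h := walshCoeff_sum_flipAt f S
    simp only [g, walshCoeff, sub_mul, sum_sub_distrib, mul_assoc, ← mul_sum] at h ⊢
    rw [h]
    ring
  have hquad : 0 ≤ ∑ S, (2 - 2 * #S) * walshCoeff f S ^ 2 := by
    have h := sum_walshCoeff_mul_walshCoeff g f
    simp only [hg, mul_assoc, ← sq] at h
    rw [h]
    exact mul_nonneg (by positivity)
      (sum_nonneg fun x _ => mul_nonneg (sub_nonneg.2 (hf_flip x)) (hf₀ x))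
  have hlevel : ∀ S, (2 - 2 * #S) * walshCoeff f S ^ 2
      ≤ (if S = ∅ then 4 * walshCoeff f S ^ 2 else 0) - 2 * walshCoeff f S ^ 2 := by
    intro S
    rcases Nat.lt_or_ge #S 2 with hS | hS
    · interval_cases hcard : #S
      · rw [if_pos (card_eq_zero.1 hcard)]
        push_cast
        linarith [sq_nonneg (walshCoeff f ∅)]
      · have hc : walshCoeff f S = 0 := walshCoeff_eq_zero_of_odd hf_compl (by rw [hcard]; decide)
        simp [hc]
    · have hS' : (2 : ℝ) ≤ #S := by exact_mod_cast hS
      rw [if_neg (by rintro rfl; simp at hS)]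
      nlinarith [sq_nonneg (walshCoeff f S)]
  have hsum := (sum_le_sum (s := univ) fun S _ => hlevel S).trans' hquad
  rw [sum_sub_distrib, sum_ite_eq', if_pos (mem_univ _), ← mul_sum] at hsum
  have hparseval := sum_walshCoeff_mul_walshCoeff f f
  simp_rw [← sq] at hparseval
  rw [← hparseval, ← walshCoeff_empty]
  linarith

lemma sum_sgn_flipAt_apply (x : Fin n → Bool) (j : Fin n) :
    ∑ i, sgn (flipAt i x j) = (n - 2) * sgn (x j) := by
  rw [← add_sum_erase _ _ (mem_univ j), flipAt_apply_self, sgn_not,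
    sum_congr rfl fun i hi => by rw [flipAt_apply_of_ne (ne_of_mem_erase hi).symm], sum_const,
    card_erase_of_mem (mem_univ j), card_univ, Fintype.card_fin, nsmul_eq_mul]
  rcases Nat.eq_zero_or_pos n with rfl | hn
  · exact j.elim0
  · rw [Nat.cast_sub hn]
    ring

section NormedSpace

variable {E : Type*} [SeminormedAddCommGroup E] [NormedSpace ℝ E]

lemma sum_flipAt_sgn_smul (v : Fin n → E) (x : Fin n → Bool) :
    ∑ i, ∑ j, sgn (flipAt i x j) • v j = ((n : ℝ) - 2) • ∑ j, sgn (x j) • v j := by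
  rw [sum_comm, smul_sum]
  simp_rw [← sum_smul, sum_sgn_flipAt_apply, mul_smul]

lemma two_pow_mul_sum_norm_sq_le (v : Fin n → E) :
    2 ^ n * ∑ x : Fin n → Bool, ‖∑ j, sgn (x j) • v j‖ ^ 2
      ≤ 2 * (∑ x : Fin n → Bool, ‖∑ j, sgn (x j) • v j‖) ^ 2 := by
  refine two_pow_mul_sum_sq_le (fun x => norm_nonneg _) (fun x => ?_) (fun x => ?_)
  · simp only [Pi.compl_apply, Bool.compl_eq_bnot, sgn_not, neg_smul, sum_neg_distrib, norm_neg]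
  · calc ((n : ℝ) - 2) * ‖∑ j, sgn (x j) • v j‖
        ≤ ‖((n : ℝ) - 2) • ∑ j, sgn (x j) • v j‖ := by
          rw [norm_smul, Real.norm_eq_abs]
          exact mul_le_mul_of_nonneg_right (le_abs_self _) (norm_nonneg _)
      _ ≤ ∑ i, ‖∑ j, sgn (flipAt i x j) • v j‖ := by
          rw [← sum_flipAt_sgn_smul]
          exact norm_sum_le _ _

end NormedSpace

section InnerProductSpace

variable {E : Type*} [SeminormedAddCommGroup E] [InnerProductSpace ℝ E]

lemma sum_norm_sgn_smul_sq (v : Fin n → E) :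
    ∑ x : Fin n → Bool, ‖∑ j, sgn (x j) • v j‖ ^ 2 = 2 ^ n * ∑ j, ‖v j‖ ^ 2 := by
  calc ∑ x : Fin n → Bool, ‖∑ j, sgn (x j) • v j‖ ^ 2
      = ∑ j, ∑ k, (∑ x : Fin n → Bool, sgn (x j) * sgn (x k)) * inner ℝ (v j) (v k) := by
        simp_rw [← real_inner_self_eq_norm_sq, sum_inner, inner_sum, real_inner_smul_left,
          real_inner_smul_right, sum_mul]
        rw [sum_comm]
        refine sum_congr rfl fun j _ => ?_
        rw [sum_comm]
        exact sum_congr rfl fun k _ => sum_congr rfl fun x _ => by ring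
    _ = 2 ^ n * ∑ j, ‖v j‖ ^ 2 := by
        simp_rw [sum_sgn_mul_sgn, ite_mul, zero_mul, sum_ite_eq, mem_univ, if_true,
          real_inner_self_eq_norm_sq, mul_sum]

lemma two_pow_mul_sum_norm_le (v : Fin n → E) :
    2 ^ n * ∑ j, ‖v j‖ ≤ √(2 * n) * ∑ x : Fin n → Bool, ‖∑ j, sgn (x j) • v j‖ := by
  rw [← pow_le_pow_iff_left₀ (by positivity) (by positivity) two_ne_zero]
  have hcs : (∑ j, ‖v j‖) ^ 2 ≤ n * ∑ j, ‖v j‖ ^ 2 := by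
    simpa using sq_sum_le_card_mul_sum_sq (s := univ) (f := fun j => ‖v j‖)
  calc (2 ^ n * ∑ j, ‖v j‖) ^ 2 = 2 ^ n * 2 ^ n * (∑ j, ‖v j‖) ^ 2 := by ring
    _ ≤ 2 ^ n * 2 ^ n * (n * ∑ j, ‖v j‖ ^ 2) := by gcongr
    _ = n * (2 ^ n * ∑ x : Fin n → Bool, ‖∑ j, sgn (x j) • v j‖ ^ 2) := by
        rw [sum_norm_sgn_smul_sq]
        ring
    _ ≤ n * (2 * (∑ x : Fin n → Bool, ‖∑ j, sgn (x j) • v j‖) ^ 2) := by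
        gcongr n * ?_
        exact two_pow_mul_sum_norm_sq_le v
    _ = (√(2 * n) * ∑ x : Fin n → Bool, ‖∑ j, sgn (x j) • v j‖) ^ 2 := by
        rw [mul_pow, Real.sq_sqrt (by positivity)]
        ring

end InnerProductSpace

lemma two_pow_mul_sum_integral_norm_le {α E : Type*} [MeasurableSpace α] {μ : Measure α}
    [NormedAddCommGroup E] [InnerProductSpace ℝ E] {f : Fin n → α → E}
    (hf : ∀ j, Integrable (f j) μ) :
    2 ^ n * ∑ j, ∫ t, ‖f j t‖ ∂μ
      ≤ √(2 * n) * ∑ x : Fin n → Bool, ∫ t, ‖∑ j, sgn (x j) • f j t‖ ∂μ := by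
  have hsigned (x : Fin n → Bool) : Integrable (fun t => ∑ j, sgn (x j) • f j t) μ :=
    integrable_finsetSum _ fun j _ => (hf j).smul (sgn (x j))
  rw [← integral_finsetSum _ fun j _ => (hf j).norm, ← integral_const_mul,
    ← integral_finsetSum _ fun x _ => (hsigned x).norm, ← integral_const_mul]
  exact integral_mono ((integrable_finsetSum _ fun j _ => (hf j).norm).const_mul _)
    ((integrable_finsetSum _ fun x _ => (hsigned x).norm).const_mul _)
    fun t => two_pow_mul_sum_norm_le fun j => f j t

end BooleanCube

lemma norm_fourierCoeff_le {T : ℝ} [Fact (0 < T)] {E : Type*} [NormedAddCommGroup E]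
    [NormedSpace ℂ E] (f : AddCircle T → E) (k : ℤ) :
    ‖fourierCoeff f k‖ ≤ ∫ t, ‖f t‖ ∂AddCircle.haarAddCircle := by
  refine (norm_integral_le_integral_norm _).trans_eq ?_
  simp [norm_smul, fourier_apply, Circle.norm_coe]

lemma sqrt_div_two_le_of_le_sqrt_two_mul {a M : ℝ} (ha : 0 < a) (h : a ≤ √(2 * a) * M) :
    √(a / 2) ≤ M := by
  have hM : 0 < M := pos_of_mul_pos_right (ha.trans_le h) (Real.sqrt_nonneg _)
  rw [Real.sqrt_le_iff]
  refine ⟨hM.le, ?_⟩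
  nlinarith [Real.sq_sqrt (by positivity : (0 : ℝ) ≤ 2 * a)]

open BooleanCube

theorem stmt8 (n : ℕ) (hn : 1 ≤ n) (Φ : Fin n → AddCircle (2 * Real.pi) → ℂ)
    (hΦ : ∀ j, Integrable (Φ j) AddCircle.haarAddCircle)
    (hcoef : ∀ j : Fin n, fourierCoeff (Φ j) (j : ℤ) = 1)
    (M : ℝ)
    (hM : ∀ ε : Fin n → ℝ, (∀ j, ε j = 1 ∨ ε j = -1) →
      ∫ x, ‖∑ j, (ε j : ℂ) * Φ j x‖ ∂AddCircle.haarAddCircle ≤ M) :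
    Real.sqrt (n / 2) ≤ M := by
  have hΦ_norm (j : Fin n) : 1 ≤ ∫ t, ‖Φ j t‖ ∂AddCircle.haarAddCircle := by
    have h := norm_fourierCoeff_le (Φ j) j
    rwa [hcoef j, norm_one] at h
  have hS_le (x : Fin n → Bool) : ∫ t, ‖∑ j, sgn (x j) • Φ j t‖ ∂AddCircle.haarAddCircle ≤ M := by
    simpa only [Complex.real_smul] using hM (fun j => sgn (x j)) fun j => by cases x j <;> simp
  have key : 2 ^ n * (n : ℝ) ≤ 2 ^ n * (√(2 * n) * M) := calc
    2 ^ n * (n : ℝ) ≤ 2 ^ n * ∑ j, ∫ t, ‖Φ j t‖ ∂AddCircle.haarAddCircle := by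
        gcongr
        simpa using sum_le_sum (s := univ) fun j _ => hΦ_norm j
    _ ≤ √(2 * n) * ∑ x : Fin n → Bool, ∫ t, ‖∑ j, sgn (x j) • Φ j t‖ ∂AddCircle.haarAddCircle :=
        two_pow_mul_sum_integral_norm_le hΦ
    _ ≤ √(2 * n) * (2 ^ n * M) := by
        gcongr
        simpa using sum_le_sum (s := univ) fun x _ => hS_le x
    _ = 2 ^ n * (√(2 * n) * M) := by ring
  exact sqrt_div_two_le_of_le_sqrt_two_mul (by exact_mod_cast hn)
    (le_of_mul_le_mul_left key (by positivity))
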